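/- arXiv:2209.01729 — 10 statements merged into one kernel-verified Lean document; each statement's English description precedes it below -/
import Mathlib

section
/- For real numbers t, k, ω, x with t ≥ k^ω ≥ k ≥ 1, ω ≥ 1, and 0 ≤ x ≤ 1/2, the inequality (1+t)^x ≥ (1/2)^x + ((1+k^ω)^x - (1/2)^x)/k^(ωx) · t^x holds. -/
/-!
Put `a = k ^ ω ≥ 1` and `c = ((1 + a) ^ x - (1 / 2) ^ x) / a ^ x`. Since `k ^ (ω * x) = a ^ x`, the
claim says that `f u = (1 + u) ^ x - c * u ^ x` satisfies `f t ≥ f a = (1 / 2) ^ x` for `t ≥ a`,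
so it suffices that `f` is monotone on `[a, ∞)`. Its derivative is
`x * ((1 + u) ^ (x - 1) - c * u ^ (x - 1))`, which is nonnegative as soon as
`c ≤ (u / (1 + u)) ^ (1 - x)`; as `u / (1 + u)` increases, this reduces to `u = a`, where it
becomes `(1 + a) ^ (x - 1) ≤ (1 / 2) ^ x`. That holds because `1 + a ≥ 2` and `x - 1 ≤ -x`.
-/

open Real Set

lemma one_add_rpow_sub_one_le_half_rpow {a x : ℝ} (ha : 1 ≤ a) (hx : x ≤ 1 / 2) :
    (1 + a) ^ (x - 1) ≤ (1 / 2 : ℝ) ^ x :=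
  calc (1 + a) ^ (x - 1) ≤ (2 : ℝ) ^ (x - 1) :=
        rpow_le_rpow_of_nonpos (by norm_num) (by linarith) (by linarith)
    _ ≤ (2 : ℝ) ^ (-x) := rpow_le_rpow_of_exponent_le (by norm_num) (by linarith)
    _ = (1 / 2 : ℝ) ^ x := by rw [rpow_neg (by norm_num), one_div, inv_rpow (by norm_num)]

lemma div_one_add_rpow_mul_rpow {u : ℝ} (hu : 0 < u) (x y : ℝ) :
    (u / (1 + u)) ^ (1 - x) * u ^ (x + y - 1) = u ^ y * (1 + u) ^ (x - 1) := by
  have h1u : 0 < 1 + u := by linarith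
  rw [div_rpow hu.le h1u.le, div_mul_eq_mul_div, ← rpow_add hu,
    show 1 - x + (x + y - 1) = y by ring, show x - 1 = -(1 - x) by ring, rpow_neg h1u.le,
    div_eq_mul_inv]

lemma one_add_rpow_sub_half_rpow_div_rpow_le {a x : ℝ} (ha : 1 ≤ a) (hx : x ≤ 1 / 2) :
    ((1 + a) ^ x - (1 / 2 : ℝ) ^ x) / a ^ x ≤ (a / (1 + a)) ^ (1 - x) := by
  have ha0 : 0 < a := by linarith
  have h1a : 0 < 1 + a := by linarith
  rw [div_le_iff₀ (rpow_pos_of_pos ha0 x)]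
  have hsplit : (1 + a) ^ x = (1 + a) * (1 + a) ^ (x - 1) := by
    conv_lhs => rw [← add_sub_cancel 1 x, rpow_add h1a, rpow_one]
  have hexp := div_one_add_rpow_mul_rpow ha0 x 1
  rw [add_sub_cancel_right, rpow_one] at hexp
  rw [hexp, hsplit]
  linarith [one_add_rpow_sub_one_le_half_rpow ha hx]

lemma mul_rpow_sub_one_le_one_add_rpow_sub_one {a u c x : ℝ} (ha : 0 < a) (hau : a ≤ u)
    (hx : x ≤ 1) (hc : c ≤ (a / (1 + a)) ^ (1 - x)) :
    c * u ^ (x - 1) ≤ (1 + u) ^ (x - 1) := by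
  have hu : 0 < u := ha.trans_le hau
  have hbase : a / (1 + a) ≤ u / (1 + u) := by
    rw [div_le_div_iff₀ (by linarith) (by linarith)]
    linarith
  calc c * u ^ (x - 1) ≤ (u / (1 + u)) ^ (1 - x) * u ^ (x - 1) := by
        gcongr
        exact hc.trans (rpow_le_rpow (by positivity) hbase (by linarith))
    _ = (1 + u) ^ (x - 1) := by
        simpa using div_one_add_rpow_mul_rpow hu x 0

lemma monotoneOn_one_add_rpow_sub_mul_rpow {a c x : ℝ} (ha : 0 < a) (hx0 : 0 ≤ x)
    (hx1 : x ≤ 1) (hc : c ≤ (a / (1 + a)) ^ (1 - x)) :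
    MonotoneOn (fun u : ℝ => (1 + u) ^ x - c * u ^ x) (Ici a) := by
  refine monotoneOn_of_hasDerivWithinAt_nonneg (convex_Ici a)
    (f' := fun u => x * (1 + u) ^ (x - 1) * 1 - c * (x * u ^ (x - 1))) ?_ ?_ ?_
  · exact ((continuousOn_const.add continuousOn_id).rpow_const fun _ _ => Or.inr hx0).sub
      (continuousOn_const.mul (continuousOn_id.rpow_const fun _ _ => Or.inr hx0))
  · intro u hu
    rw [interior_Ici] at hu
    have hu0 : 0 < u := ha.trans hu
    exact (((hasDerivAt_rpow_const (Or.inl (by linarith : 1 + u ≠ 0))).comp u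
      ((hasDerivAt_id u).const_add 1)).sub
      ((hasDerivAt_rpow_const (Or.inl hu0.ne')).const_mul c)).hasDerivWithinAt
  · intro u hu
    rw [interior_Ici] at hu
    have := mul_rpow_sub_one_le_one_add_rpow_sub_one ha (le_of_lt hu) hx1 hc
    nlinarith

theorem stmt_0_general (t k ω x : ℝ) (hk : 1 ≤ k) (hkω : k ≤ k ^ ω) (ht : k ^ ω ≤ t)
    (hx0 : 0 ≤ x) (hx : x ≤ 1 / 2) :
    (1 + t) ^ x ≥ (1 / 2 : ℝ) ^ x + ((1 + k ^ ω) ^ x - (1 / 2 : ℝ) ^ x) / k ^ (ω * x) * t ^ x := by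
  set a := k ^ ω
  have ha : 1 ≤ a := hk.trans hkω
  have hmono := monotoneOn_one_add_rpow_sub_mul_rpow (by linarith) hx0 (by linarith)
    (one_add_rpow_sub_half_rpow_div_rpow_le ha hx) self_mem_Ici ht ht
  have hcancel : ((1 + a) ^ x - (1 / 2 : ℝ) ^ x) / a ^ x * a ^ x = (1 + a) ^ x - (1 / 2 : ℝ) ^ x :=
    div_mul_cancel₀ _ (rpow_pos_of_pos (by linarith) x).ne'
  rw [rpow_mul (by linarith)]
  simp only at hmono
  linarith

theorem stmt_0 (t k ω x : ℝ) (hk : 1 ≤ k) (hkω : k ≤ k ^ ω) (ht : k ^ ω ≤ t)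
    (hω : 1 ≤ ω) (hx0 : 0 ≤ x) (hx : x ≤ 1 / 2) :
    (1 + t) ^ x ≥ (1 / 2 : ℝ) ^ x + ((1 + k ^ ω) ^ x - (1 / 2 : ℝ) ^ x) / k ^ (ω * x) * t ^ x :=
  stmt_0_general t k ω x hk hkω ht hx0 hx
end

section
/- For real numbers t, k, ω, x with 0 ≤ t ≤ k^ω ≤ k ≤ 1, k > 0, ω ≥ 1, and x ≥ 1, the inequality (1+t)^x ≥ (1/2)^x + ((1+k^ω)^x - (1/2)^x)/k^(ωx) · t^x holds. -/
private lemma aux_rpow_sub (x A B : ℝ) (hx : 1 ≤ x) (hB : 0 ≤ B) (hBA : B ≤ A)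
    (c : ℝ) (hc : 0 ≤ c) :
    A ^ x - B ^ x ≤ (A + c) ^ x - (B + c) ^ x := by
  set f : ℝ → ℝ := fun y => (A + y) ^ x - (B + y) ^ x with hf
  have hd : ∀ y : ℝ, HasDerivAt f (x * (A + y) ^ (x - 1) * 1 - x * (B + y) ^ (x - 1) * 1) y := by
    intro y
    have h1 : HasDerivAt (fun y : ℝ => (A + y) ^ x) (x * (A + y) ^ (x - 1) * 1) y :=
      (Real.hasDerivAt_rpow_const (Or.inr hx)).comp y ((hasDerivAt_id y).const_add A)
    have h2 : HasDerivAt (fun y : ℝ => (B + y) ^ x) (x * (B + y) ^ (x - 1) * 1) y :=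
      (Real.hasDerivAt_rpow_const (Or.inr hx)).comp y ((hasDerivAt_id y).const_add B)
    exact h1.sub h2
  have hmono : MonotoneOn f (Set.Ici (0 : ℝ)) := by
    apply monotoneOn_of_deriv_nonneg (convex_Ici 0)
    · exact fun y _ => ((hd y).continuousAt).continuousWithinAt
    · intro y hy
      exact ((hd y).differentiableAt).differentiableWithinAt
    · intro y hy
      rw [(hd y).deriv]
      rw [interior_Ici] at hy
      have hy0 : 0 < y := hy
      have h1 : (B + y) ^ (x - 1) ≤ (A + y) ^ (x - 1) :=
        Real.rpow_le_rpow (by linarith) (by linarith) (by linarith)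
      have hx0 : (0 : ℝ) ≤ x := by linarith
      nlinarith
  have := hmono (Set.self_mem_Ici) (Set.mem_Ici.2 hc) hc
  simpa [hf] using this

theorem stmt_1 (t k ω x : ℝ) (hk0 : 0 < k) (ht0 : 0 ≤ t) (ht : t ≤ k ^ ω)
    (hkω : k ^ ω ≤ k) (hk1 : k ≤ 1) (hω : 1 ≤ ω) (hx : 1 ≤ x) :
    (1 + t) ^ x ≥ (1 / 2 : ℝ) ^ x + ((1 + k ^ ω) ^ x - (1 / 2 : ℝ) ^ x) / k ^ (ω * x) * t ^ x := by
  set K := k ^ ω with hK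
  set a := (1 / 2 : ℝ) ^ x with ha
  have hK0 : 0 < K := Real.rpow_pos_of_pos hk0 ω
  have hx0 : (0 : ℝ) ≤ x := by linarith
  have hKx : k ^ (ω * x) = K ^ x := Real.rpow_mul hk0.le ω x
  have hKx0 : 0 < K ^ x := Real.rpow_pos_of_pos hK0 x
  rw [ge_iff_le, hKx]
  have ha0 : 0 ≤ a := Real.rpow_nonneg (by norm_num) x
  have ha1 : a ≤ 1 := Real.rpow_le_one (by norm_num) (by norm_num) hx0
  have htK : t ^ x ≤ K ^ x := Real.rpow_le_rpow ht0 ht hx0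
  have key : K ^ x - t ^ x ≤ (K + K * t) ^ x - (t + K * t) ^ x :=
    aux_rpow_sub x K t hx ht0 ht (K * t) (by positivity)
  have e1 : (1 + t) ^ x * K ^ x = (K + K * t) ^ x := by
    rw [← Real.mul_rpow (by linarith) hK0.le]; ring_nf
  have e2 : (1 + K) ^ x * t ^ x = (t + K * t) ^ x := by
    rw [← Real.mul_rpow (by linarith) ht0]; ring_nf
  have main : ((1 + K) ^ x - a) * t ^ x ≤ ((1 + t) ^ x - a) * K ^ x := by
    have h1 : a * (K ^ x - t ^ x) ≤ K ^ x - t ^ x := by nlinarith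
    nlinarith [e1, e2]
  have hfin : ((1 + K) ^ x - a) * t ^ x / K ^ x ≤ (1 + t) ^ x - a :=
    (div_le_iff₀ hKx0).2 main
  have heq : ((1 + K) ^ x - a) / K ^ x * t ^ x = ((1 + K) ^ x - a) * t ^ x / K ^ x := by ring
  rw [heq]
  linarith
end

section
/- The function g(x,y) = (1+y)^x - (y/2)^x, for fixed x with 0 ≤ x ≤ 1/2, is monotonically decreasing in y on (0,1]. -/
/-!
The derivative in `y` is `x ((1 + y) ^ (x - 1) - (y / 2) ^ (x - 1) / 2)`. On `(0, 1]` we have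
`1 + y ≥ 2 y = 4 (y / 2)`, and the exponent `x - 1 ≤ -1/2` is negative, so
`(1 + y) ^ (x - 1) ≤ 4 ^ (x - 1) (y / 2) ^ (x - 1) ≤ (y / 2) ^ (x - 1) / 2`.
-/

open Real Set

lemma four_rpow_le_half {p : ℝ} (hp : p ≤ -1 / 2) : (4 : ℝ) ^ p ≤ 1 / 2 := by
  have h4 : (4 : ℝ) ^ (-1 / 2 : ℝ) = 1 / 2 := by
    rw [neg_div, rpow_neg (by norm_num), ← sqrt_eq_rpow, show (4 : ℝ) = 2 ^ 2 by norm_num,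
      sqrt_sq (by norm_num), one_div]
  exact h4 ▸ rpow_le_rpow_of_exponent_le (by norm_num) hp

lemma one_add_rpow_le_half_rpow_half {p y : ℝ} (hp : p ≤ -1 / 2) (hy₀ : 0 < y) (hy₁ : y ≤ 1) :
    (1 + y) ^ p ≤ (y / 2) ^ p / 2 := by
  calc (1 + y) ^ p ≤ (4 * (y / 2)) ^ p :=
        rpow_le_rpow_of_nonpos (by positivity) (by linarith) (by linarith)
    _ = 4 ^ p * (y / 2) ^ p := mul_rpow (by norm_num) (by positivity)
    _ ≤ 1 / 2 * (y / 2) ^ p := by gcongr; exact four_rpow_le_half hp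
    _ = (y / 2) ^ p / 2 := by ring

lemma hasDerivAt_one_add_rpow_sub_half_rpow (x : ℝ) {y : ℝ} (hy : 0 < y) :
    HasDerivAt (fun y : ℝ => (1 + y) ^ x - (y / 2) ^ x)
      (x * (1 + y) ^ (x - 1) - x * (y / 2) ^ (x - 1) / 2) y := by
  have h₁ := ((hasDerivAt_id' y).const_add 1).rpow_const (p := x) (Or.inl (by simp; linarith))
  have h₂ := ((hasDerivAt_id' y).div_const 2).rpow_const (p := x) (Or.inl (by simp; linarith))
  exact (h₁.sub h₂).congr_deriv (by ring)

lemma antitoneOn_one_add_rpow_sub_half_rpow {x : ℝ} (hx₀ : 0 ≤ x) (hx : x ≤ 1 / 2) :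
    AntitoneOn (fun y : ℝ => (1 + y) ^ x - (y / 2) ^ x) (Ioc 0 1) := by
  refine antitoneOn_of_hasDerivWithinAt_nonpos (convex_Ioc 0 1)
    (f' := fun y => x * (1 + y) ^ (x - 1) - x * (y / 2) ^ (x - 1) / 2) ?_ ?_ ?_
  · refine ((continuousOn_const.add continuousOn_id).rpow_const ?_).sub
      ((continuousOn_id.div_const 2).rpow_const ?_) <;> exact fun _ _ => Or.inr hx₀
  · rw [interior_Ioc]
    exact fun y hy => (hasDerivAt_one_add_rpow_sub_half_rpow x hy.1).hasDerivWithinAt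
  · rw [interior_Ioc]
    rintro y ⟨hy₀, hy₁⟩
    have key := one_add_rpow_le_half_rpow_half (p := x - 1) (by linarith) hy₀ hy₁.le
    calc _ = x * ((1 + y) ^ (x - 1) - (y / 2) ^ (x - 1) / 2) := by ring
      _ ≤ 0 := mul_nonpos_of_nonneg_of_nonpos hx₀ (sub_nonpos.2 key)

theorem stmt_3 (x : ℝ) (hx0 : 0 ≤ x) (hx : x ≤ 1 / 2) :
    ∀ y₁ y₂ : ℝ, 0 < y₁ → y₁ ≤ y₂ → y₂ ≤ 1 →
      (1 + y₂) ^ x - (y₂ / 2) ^ x ≤ (1 + y₁) ^ x - (y₁ / 2) ^ x :=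
  fun _ _ hy₁ h₁₂ hy₂ => antitoneOn_one_add_rpow_sub_half_rpow hx0 hx
    ⟨hy₁, h₁₂.trans hy₂⟩ ⟨hy₁.trans_le h₁₂, hy₂⟩ h₁₂
end

section
/- For all x, y ≥ 0 with x² + y² ≤ 1 and all η ≥ 1, the function f_G(x) = (1-√(1-x²))/2 satisfies f_G(√(x²+y²))^η ≥ f_G(x)^η + f_G(y)^η. -/
lemma aux_rpow_add {a b p : ℝ} (ha : 0 ≤ a) (hb : 0 ≤ b) (hp : 1 ≤ p) :
    a ^ p + b ^ p ≤ (a + b) ^ p := by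
  lift a to NNReal using ha
  lift b to NNReal using hb
  have := NNReal.add_rpow_le_rpow_add a b hp
  exact_mod_cast this


theorem stmt_6 (x y η : ℝ) (hx : 0 ≤ x) (hy : 0 ≤ y) (hxy : x ^ 2 + y ^ 2 ≤ 1)
    (hη : 1 ≤ η) :
    ((1 - Real.sqrt (1 - (Real.sqrt (x ^ 2 + y ^ 2)) ^ 2)) / 2) ^ η ≥
      ((1 - Real.sqrt (1 - x ^ 2)) / 2) ^ η + ((1 - Real.sqrt (1 - y ^ 2)) / 2) ^ η := by
  have hs : Real.sqrt (x ^ 2 + y ^ 2) ^ 2 = x ^ 2 + y ^ 2 := Real.sq_sqrt (by positivity)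
  rw [hs]
  have hx2 : x ^ 2 ≤ 1 := by nlinarith [sq_nonneg y]
  have hy2 : y ^ 2 ≤ 1 := by nlinarith [sq_nonneg x]
  set u := Real.sqrt (1 - x ^ 2) with hu
  set v := Real.sqrt (1 - y ^ 2) with hv
  set w := Real.sqrt (1 - (x ^ 2 + y ^ 2)) with hw
  have hu0 : 0 ≤ u := Real.sqrt_nonneg _
  have hv0 : 0 ≤ v := Real.sqrt_nonneg _
  have hw0 : 0 ≤ w := Real.sqrt_nonneg _
  have hu2 : u ^ 2 = 1 - x ^ 2 := Real.sq_sqrt (by linarith)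
  have hv2 : v ^ 2 = 1 - y ^ 2 := Real.sq_sqrt (by linarith)
  have hw2 : w ^ 2 = 1 - (x ^ 2 + y ^ 2) := Real.sq_sqrt (by linarith)
  have hu1 : u ≤ 1 := Real.sqrt_le_one.mpr (by nlinarith [sq_nonneg x])
  have hv1 : v ≤ 1 := Real.sqrt_le_one.mpr (by nlinarith [sq_nonneg y])
  have huvw : w ≤ u * v := by
    nlinarith [sq_nonneg (u * v - w), sq_nonneg (u * v + w), mul_nonneg hu0 hv0,
      sq_nonneg (x * y)]
  have hkey : 1 + w ≤ u + v := by
    nlinarith [sq_nonneg (u + v - (1 + w)), mul_nonneg hu0 hv0]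
  have ha0 : 0 ≤ (1 - u) / 2 := by linarith
  have hb0 : 0 ≤ (1 - v) / 2 := by linarith
  have hab : (1 - u) / 2 + (1 - v) / 2 ≤ (1 - w) / 2 := by linarith
  calc ((1 - u) / 2) ^ η + ((1 - v) / 2) ^ η
      ≤ ((1 - u) / 2 + (1 - v) / 2) ^ η := aux_rpow_add ha0 hb0 hη
    _ ≤ ((1 - w) / 2) ^ η := Real.rpow_le_rpow (by linarith) hab (by linarith)
end

section
/- For all x, y ≥ 0 with x² + y² ≤ 1 and all η ≥ 1, the function f_B(x) = 2 - 2√((1+√(1-x²))/2) satisfies f_B(√(x²+y²))^η ≥ f_B(x)^η + f_B(y)^η. -/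
set_option maxHeartbeats 1000000 in
private lemma core_stmt7 (A B C : ℝ) (hA1 : 2 ≤ A^2) (hA2 : A ≤ 2) (hB1 : 2 ≤ B^2)
    (hB2 : B ≤ 2) (hC1 : 2 ≤ C^2) (hC2 : C ≤ 2) (hA0 : 0 ≤ A) (hB0 : 0 ≤ B) (hC0 : 0 ≤ C)
    (hcon : (A^2-2)^2 + (B^2-2)^2 = 4 + (C^2-2)^2) :
    2 + C ≤ A + B := by
  have hA4 : A^2 ≤ 4 := by nlinarith
  have hC4 : C^2 ≤ 4 := by nlinarith
  have hB4 : B^2 ≤ 4 := by nlinarith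
  have h1 : (C^2-2)^2 ≤ (B^2-2)^2 := by nlinarith
  have hC2B : C^2 ≤ B^2 := by nlinarith
  have hCB : C ≤ B := by nlinarith
  have hE1 : (A-C)*((A+C)*(A^2+C^2-4)) = B^2*(2-B)*(2+B) := by linear_combination hcon
  have hd0 : 0 ≤ (A+C)*(A^2+C^2-4) := mul_nonneg (by linarith) (by linarith)
  rcases eq_or_lt_of_le hd0 with hd | hd
  · have hpos : 0 < A + C := by nlinarith
    have hAC : A^2 + C^2 - 4 = 0 := by
      rcases mul_eq_zero.1 hd.symm with h | h
      · linarith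
      · exact h
    have hA2' : A^2 = 2 := by linarith
    have hC2' : C^2 = 2 := by linarith
    have hBB : (B^2-4)*B^2 = 0 := by
      linear_combination hcon - (A^2-2)*hA2' + (C^2-2)*hC2'
    have hB2pos : (0:ℝ) < B^2 := by linarith
    have hBB4 : B^2 = 4 := by
      rcases mul_eq_zero.1 hBB with h | h
      · linarith
      · linarith
    have hB : B = 2 := by nlinarith [mul_nonneg hB0 (sub_nonneg.2 hB2)]
    have hAs : A = Real.sqrt 2 := by rw [← hA2', Real.sqrt_sq hA0]
    have hCs : C = Real.sqrt 2 := by rw [← hC2', Real.sqrt_sq hC0]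
    rw [hAs, hCs, hB]; linarith
  · have e2a : A^2 + C^2 - 4 ≤ B^2 := by linarith
    have e2b : A + C ≤ 2 + B := by linarith
    have hE2 : (A+C)*(A^2+C^2-4) ≤ (2+B)*B^2 :=
      mul_le_mul e2b e2a (by linarith) (by linarith)
    have key : 0 ≤ (A+B-2-C)*((A+C)*(A^2+C^2-4)) := by
      nlinarith [mul_nonneg (sub_nonneg.2 hB2) (sub_nonneg.2 hE2)]
    by_contra h
    push_neg at h
    nlinarith [mul_neg_of_neg_of_pos (by linarith : A+B-2-C < 0) hd]

-- helper: rewrite 2 - 2√((1+√(1-t))/2) with t ∈ [0,1]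
private lemma sqrt_form (a : ℝ) (ha : 0 ≤ a) :
    2 * Real.sqrt ((1 + a) / 2) = Real.sqrt (2 + 2*a) := by
  rw [show (2 + 2*a : ℝ) = 4 * ((1+a)/2) by ring, Real.sqrt_mul (by norm_num),
    show (4:ℝ) = 2^2 by norm_num, Real.sqrt_sq (by norm_num)]

private lemma rpow_superadd (u v p : ℝ) (hu : 0 ≤ u) (hv : 0 ≤ v) (hp : 1 ≤ p) :
    u ^ p + v ^ p ≤ (u + v) ^ p := by
  have h := NNReal.add_rpow_le_rpow_add u.toNNReal v.toNNReal hp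
  rw [← Real.toNNReal_add hu hv] at h
  have h2 : ((u.toNNReal ^ p + v.toNNReal ^ p : NNReal) : ℝ) ≤
      (((u + v).toNNReal ^ p : NNReal) : ℝ) := by exact_mod_cast h
  simpa [NNReal.coe_rpow, Real.coe_toNNReal', max_eq_left, hu, hv,
    add_nonneg hu hv] using h2

theorem stmt_7 (x y η : ℝ) (hx : 0 ≤ x) (hy : 0 ≤ y) (hxy : x ^ 2 + y ^ 2 ≤ 1)
    (hη : 1 ≤ η) :
    (2 - 2 * Real.sqrt ((1 + Real.sqrt (1 - (Real.sqrt (x ^ 2 + y ^ 2)) ^ 2)) / 2)) ^ η ≥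
      (2 - 2 * Real.sqrt ((1 + Real.sqrt (1 - x ^ 2)) / 2)) ^ η +
        (2 - 2 * Real.sqrt ((1 + Real.sqrt (1 - y ^ 2)) / 2)) ^ η := by
  have hs2 : Real.sqrt (x ^ 2 + y ^ 2) ^ 2 = x ^ 2 + y ^ 2 :=
    Real.sq_sqrt (by positivity)
  rw [hs2]
  set a := Real.sqrt (1 - x ^ 2) with ha_def
  set b := Real.sqrt (1 - y ^ 2) with hb_def
  set c := Real.sqrt (1 - (x ^ 2 + y ^ 2)) with hc_def
  have hx2 : x ^ 2 ≤ 1 := by linarith [sq_nonneg y]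
  have hy2 : y ^ 2 ≤ 1 := by linarith [sq_nonneg x]
  have ha2 : a ^ 2 = 1 - x ^ 2 := Real.sq_sqrt (by linarith)
  have hb2 : b ^ 2 = 1 - y ^ 2 := Real.sq_sqrt (by linarith)
  have hc2 : c ^ 2 = 1 - (x ^ 2 + y ^ 2) := Real.sq_sqrt (by linarith)
  have ha0 : 0 ≤ a := Real.sqrt_nonneg _
  have hb0 : 0 ≤ b := Real.sqrt_nonneg _
  have hc0 : 0 ≤ c := Real.sqrt_nonneg _
  have ha1 : a ≤ 1 := Real.sqrt_le_one.mpr (by linarith [sq_nonneg x])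
  have hb1 : b ≤ 1 := Real.sqrt_le_one.mpr (by linarith [sq_nonneg y])
  have hc1 : c ≤ 1 := Real.sqrt_le_one.mpr (by linarith [sq_nonneg x, sq_nonneg y])
  rw [sqrt_form a ha0, sqrt_form b hb0, sqrt_form c hc0]
  set A := Real.sqrt (2 + 2*a) with hA_def
  set B := Real.sqrt (2 + 2*b) with hB_def
  set C := Real.sqrt (2 + 2*c) with hC_def
  have hA2 : A ^ 2 = 2 + 2*a := Real.sq_sqrt (by linarith)
  have hB2 : B ^ 2 = 2 + 2*b := Real.sq_sqrt (by linarith)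
  have hC2 : C ^ 2 = 2 + 2*c := Real.sq_sqrt (by linarith)
  have hA0 : 0 ≤ A := Real.sqrt_nonneg _
  have hB0 : 0 ≤ B := Real.sqrt_nonneg _
  have hC0 : 0 ≤ C := Real.sqrt_nonneg _
  have h42 : Real.sqrt 4 = 2 := by
    rw [show (4:ℝ) = 2^2 by norm_num]; exact Real.sqrt_sq (by norm_num)
  have hAle : A ≤ 2 := h42 ▸ Real.sqrt_le_sqrt (by linarith)
  have hBle : B ≤ 2 := h42 ▸ Real.sqrt_le_sqrt (by linarith)
  have hCle : C ≤ 2 := h42 ▸ Real.sqrt_le_sqrt (by linarith)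
  have hcon : (A^2-2)^2 + (B^2-2)^2 = 4 + (C^2-2)^2 := by
    rw [hA2, hB2, hC2]
    have habc : a^2 + b^2 = 1 + c^2 := by rw [ha2, hb2, hc2]; ring
    linear_combination 4*habc
  have hkey : 2 + C ≤ A + B :=
    core_stmt7 A B C (by linarith [hA2]) hAle (by linarith [hB2]) hBle (by linarith [hC2]) hCle
      hA0 hB0 hC0 hcon
  -- now: (2-A) + (2-B) ≤ 2 - C, all nonneg
  have h1 : (0:ℝ) ≤ 2 - A := by linarith
  have h2 : (0:ℝ) ≤ 2 - B := by linarith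
  have h3 : (0:ℝ) ≤ 2 - C := by linarith
  have hsum : (2 - A) + (2 - B) ≤ 2 - C := by linarith
  calc (2 - A) ^ η + (2 - B) ^ η ≤ ((2 - A) + (2 - B)) ^ η :=
        rpow_superadd _ _ _ h1 h2 hη
    _ ≤ (2 - C) ^ η := Real.rpow_le_rpow (by linarith) hsum (by linarith)
end

section
/- Let f : [0,1] → ℝ≥0 be a monotonically increasing function satisfying the superadditivity property f(√(x²+y²))^η ≥ f(x)^η + f(y)^η for all x,y ≥ 0 with x²+y² ≤ 1, where η ≥ 1. If 0 ≤ α ≤ η/2, k ≥ 1, ω ≥ 1, and f(y)^η ≥ k^ω · f(x)^η with f(x) > 0, then f(√(x²+y²))^α ≥ (1/2)^(α/η) f(x)^α + ((1+k^ω)^(α/η) - (1/2)^(α/η))/k^(ωα/η) · f(y)^α. -/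
/-!
Put `t = α / η ∈ [0, 1/2]`, `a = f(x)^η`, `b = f(y)^η` and `K = k^ω`, so that `K a ≤ b` and, by
superadditivity, `a + b ≤ f(√(x²+y²))^η`. It remains to show
`(1/2)^t a^t + ((1+K)^t - (1/2)^t) / K^t · b^t ≤ (a + b)^t`. Dividing by `b^t`, this says
`g(a/b) ≥ g(1/K)` for `g(s) = (1+s)^t - (s/2)^t`, which holds because `g` is antitone on `(0, 1]`:
there `(1+s)/s ≥ 2`, so `(1+s)^(t-1) ≤ 2^(t-1) s^(t-1) ≤ 2^(-t) s^(t-1)` when `t ≤ 1/2`.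
-/

open Real Set

lemma hasDerivAt_one_add_rpow_sub_half_rpow_mul_rpow {t z : ℝ} (hz : 0 < z) :
    HasDerivAt (fun s : ℝ => (1 + s) ^ t - (1 / 2 : ℝ) ^ t * s ^ t)
      (t * (1 + z) ^ (t - 1) - (1 / 2 : ℝ) ^ t * (t * z ^ (t - 1))) z := by
  have h1 := ((hasDerivAt_id' z).const_add 1).rpow_const (p := t) (Or.inl (by linarith))
  have h2 := (hasDerivAt_id' z).rpow_const (p := t) (Or.inl hz.ne')
  exact (h1.sub (h2.const_mul ((1 / 2 : ℝ) ^ t))).congr_deriv (by simp only [one_mul])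

lemma one_add_rpow_sub_one_le_half_rpow_mul {t z : ℝ} (ht : t ≤ 1 / 2) (hz : 0 < z)
    (hz1 : z ≤ 1) : (1 + z) ^ (t - 1) ≤ (1 / 2 : ℝ) ^ t * z ^ (t - 1) := by
  rw [← div_le_iff₀ (rpow_pos_of_pos hz _), ← div_rpow (by linarith) hz.le]
  have h2 : (2 : ℝ) ≤ (1 + z) / z := by rw [le_div_iff₀ hz]; linarith
  calc ((1 + z) / z) ^ (t - 1) ≤ (2 : ℝ) ^ (t - 1) :=
        rpow_le_rpow_of_nonpos two_pos h2 (by linarith)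
    _ ≤ (2 : ℝ) ^ (-t) := rpow_le_rpow_of_exponent_le one_le_two (by linarith)
    _ = (1 / 2 : ℝ) ^ t := by rw [rpow_neg zero_le_two, one_div, inv_rpow zero_le_two]

lemma antitoneOn_one_add_rpow_sub_half_rpow_mul_rpow {t : ℝ} (ht0 : 0 ≤ t) (ht : t ≤ 1 / 2) :
    AntitoneOn (fun s : ℝ => (1 + s) ^ t - (1 / 2 : ℝ) ^ t * s ^ t) (Ioc 0 1) := by
  have hderiv := fun z (hz : 0 < z) => hasDerivAt_one_add_rpow_sub_half_rpow_mul_rpow (t := t) hz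
  refine antitoneOn_of_deriv_nonpos (convex_Ioc 0 1) ?_ ?_ ?_
  · exact fun z hz => (hderiv z hz.1).continuousAt.continuousWithinAt
  · rw [interior_Ioc]
    exact fun z hz => (hderiv z hz.1).differentiableAt.differentiableWithinAt
  · rw [interior_Ioc]
    intro z hz
    rw [(hderiv z hz.1).deriv]
    have := mul_le_mul_of_nonneg_left
      (one_add_rpow_sub_one_le_half_rpow_mul ht hz.1 hz.2.le) ht0
    linarith

theorem half_rpow_mul_rpow_add_le_add_rpow {t K a b : ℝ} (ht0 : 0 ≤ t) (ht : t ≤ 1 / 2)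
    (hK : 1 ≤ K) (ha : 0 < a) (hab : K * a ≤ b) :
    (1 / 2 : ℝ) ^ t * a ^ t + ((1 + K) ^ t - (1 / 2 : ℝ) ^ t) / K ^ t * b ^ t ≤ (a + b) ^ t := by
  set g := fun s : ℝ => (1 + s) ^ t - (1 / 2 : ℝ) ^ t * s ^ t
  have hK0 : 0 < K := by linarith
  have hb : 0 < b := by nlinarith
  have hKinv : K⁻¹ ≤ 1 := inv_le_one_of_one_le₀ hK
  have hs : a / b ≤ K⁻¹ := by rw [div_le_iff₀ hb, ← div_eq_inv_mul, le_div_iff₀ hK0]; linarith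
  have hgK : g K⁻¹ = ((1 + K) ^ t - (1 / 2 : ℝ) ^ t) / K ^ t := by
    simp only [g]
    rw [show 1 + K⁻¹ = (1 + K) / K by field_simp; ring, div_rpow (by linarith) hK0.le,
      inv_rpow hK0.le]
    ring
  have hg : g K⁻¹ ≤ g (a / b) := antitoneOn_one_add_rpow_sub_half_rpow_mul_rpow ht0 ht
    ⟨div_pos ha hb, hs.trans hKinv⟩ ⟨inv_pos.2 hK0, hKinv⟩ hs
  have hgb : g (a / b) * b ^ t = (a + b) ^ t - (1 / 2 : ℝ) ^ t * a ^ t := by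
    rw [sub_mul, ← mul_rpow (by positivity) hb.le, mul_assoc, ← mul_rpow (by positivity) hb.le,
      add_mul, one_mul, div_mul_cancel₀ a hb.ne', add_comm b]
  calc (1 / 2 : ℝ) ^ t * a ^ t + ((1 + K) ^ t - (1 / 2 : ℝ) ^ t) / K ^ t * b ^ t
      = (1 / 2 : ℝ) ^ t * a ^ t + g K⁻¹ * b ^ t := by rw [hgK]
    _ ≤ (1 / 2 : ℝ) ^ t * a ^ t + g (a / b) * b ^ t := by gcongr
    _ = (a + b) ^ t := by rw [hgb]; ring

lemma rpow_rpow_div_cancel {a η : ℝ} (ha : 0 ≤ a) (hη : η ≠ 0) (α : ℝ) :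
    (a ^ η) ^ (α / η) = a ^ α := by
  rw [← rpow_mul ha, mul_div_cancel₀ α hη]

theorem stmt_8_general (f : ℝ → ℝ) (η α k ω x y : ℝ)
    (hf_nonneg : ∀ z ∈ Set.Icc (0 : ℝ) 1, 0 ≤ f z)
    (hη : 1 ≤ η)
    (hf_super : ∀ u v : ℝ, 0 ≤ u → 0 ≤ v → u ^ 2 + v ^ 2 ≤ 1 →
      f (Real.sqrt (u ^ 2 + v ^ 2)) ^ η ≥ f u ^ η + f v ^ η)
    (hα0 : 0 ≤ α) (hα : α ≤ η / 2) (hk : 1 ≤ k) (hω : 1 ≤ ω)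
    (hx : 0 ≤ x) (hy : 0 ≤ y) (hxy : x ^ 2 + y ^ 2 ≤ 1)
    (hfx : 0 < f x) (hcond : f y ^ η ≥ k ^ ω * f x ^ η) :
    f (Real.sqrt (x ^ 2 + y ^ 2)) ^ α ≥
      (1 / 2 : ℝ) ^ (α / η) * f x ^ α +
        ((1 + k ^ ω) ^ (α / η) - (1 / 2 : ℝ) ^ (α / η)) / k ^ (ω * α / η) * f y ^ α := by
  have hη0 : 0 < η := by linarith
  have hK : 1 ≤ k ^ ω := one_le_rpow hk (by linarith)
  have hfyη : 0 < f y ^ η := lt_of_lt_of_le (by positivity) hcond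
  have hfy : 0 < f y := (hf_nonneg y ⟨hy, by nlinarith⟩).lt_of_ne fun h => by
    rw [← h, zero_rpow hη0.ne'] at hfyη
    exact hfyη.false
  have hF : 0 ≤ f √(x ^ 2 + y ^ 2) := hf_nonneg _ ⟨sqrt_nonneg _, sqrt_le_one.mpr hxy⟩
  have ht0 : 0 ≤ α / η := div_nonneg hα0 hη0.le
  have key := half_rpow_mul_rpow_add_le_add_rpow ht0 (by rw [div_le_iff₀ hη0]; linarith) hK
    (rpow_pos_of_pos hfx η) hcond
  have hmono := rpow_le_rpow (by positivity) (hf_super x y hx hy hxy) ht0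
  rw [ge_iff_le, ← rpow_rpow_div_cancel hF hη0.ne', ← rpow_rpow_div_cancel hfx.le hη0.ne',
    ← rpow_rpow_div_cancel hfy.le hη0.ne', mul_div_assoc, rpow_mul (by linarith)]
  exact key.trans hmono

theorem stmt_8 (f : ℝ → ℝ) (η α k ω x y : ℝ)
    (hf_nonneg : ∀ z ∈ Set.Icc (0 : ℝ) 1, 0 ≤ f z)
    (hf_mono : MonotoneOn f (Set.Icc (0 : ℝ) 1))
    (hη : 1 ≤ η)
    (hf_super : ∀ u v : ℝ, 0 ≤ u → 0 ≤ v → u ^ 2 + v ^ 2 ≤ 1 →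
      f (Real.sqrt (u ^ 2 + v ^ 2)) ^ η ≥ f u ^ η + f v ^ η)
    (hα0 : 0 ≤ α) (hα : α ≤ η / 2) (hk : 1 ≤ k) (hω : 1 ≤ ω)
    (hx : 0 ≤ x) (hy : 0 ≤ y) (hxy : x ^ 2 + y ^ 2 ≤ 1)
    (hfx : 0 < f x) (hcond : f y ^ η ≥ k ^ ω * f x ^ η) :
    f (Real.sqrt (x ^ 2 + y ^ 2)) ^ α ≥
      (1 / 2 : ℝ) ^ (α / η) * f x ^ α +
        ((1 + k ^ ω) ^ (α / η) - (1 / 2 : ℝ) ^ (α / η)) / k ^ (ω * α / η) * f y ^ α :=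
  stmt_8_general f η α k ω x y hf_nonneg hη hf_super hα0 hα hk hω hx hy hxy hfx hcond
end

section
/- Let a, b, c ≥ 0 with c² ≥ a² + b², a,b,c ≤ 1, and let f_B(x) = 2-2√((1+√(1-x²))/2). Assume k ≥ 1, ω ≥ 1, η ≥ 1, 0 ≤ α ≤ η/2, and f_B(b)^η ≥ k^ω f_B(a)^η with f_B(a) > 0. Then f_B(c)^α ≥ (1/2)^(α/η) f_B(a)^α + ((1+k^ω)^(α/η) - (1/2)^(α/η))/k^(ωα/η) · f_B(b)^α. -/
/-!
Write `f_B x = g (x ^ 2)` with `g u = 2 - 2 √((1 + √(1 - u)) / 2)`. On `u ≤ 1` the function `g` is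
convex and increasing with `g 0 = 0`, hence superadditive, so the CKW inequality gives
`f_B a + f_B b ≤ f_B c`, and then `f_B a ^ η + f_B b ^ η ≤ f_B c ^ η` because `η ≥ 1`.
With `A = f_B a ^ η`, `B = f_B b ^ η`, `x = α / η ≤ 1 / 2` and `t = B / A ≥ k ^ ω` we have
`(A + B) ^ x = A ^ x (1 + t) ^ x`, and the bound follows from the monotonicity of
`t ↦ ((1 + t) ^ x - (1 / 2) ^ x) / t ^ x` on `[1, ∞)`: its derivative has the sign of
`(1 / 2) ^ x - (1 + t) ^ (x - 1)`, which is nonnegative since `(1 + t) ^ (x - 1) ≤ 2 ^ (x - 1)`.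
-/

open Set

theorem ConcaveOn.sqrt {s : Set ℝ} {f : ℝ → ℝ} (hf : ConcaveOn ℝ s f) (hf₀ : ∀ x ∈ s, 0 ≤ f x) :
    ConcaveOn ℝ s fun x ↦ √(f x) := by
  refine ⟨hf.1, fun x hx y hy a b ha hb hab ↦ ?_⟩
  calc a • √(f x) + b • √(f y) ≤ √(a • f x + b • f y) :=
        Real.strictConcaveOn_sqrt.concaveOn.2 (hf₀ x hx) (hf₀ y hy) ha hb hab
    _ ≤ √(f (a • x + b • y)) := Real.sqrt_le_sqrt (hf.2 hx hy ha hb hab)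

theorem ConvexOn.add_le_of_map_zero {s : Set ℝ} {f : ℝ → ℝ} (hf : ConvexOn ℝ s f) (h₀ : 0 ∈ s)
    (hf₀ : f 0 = 0) {u v : ℝ} (hu : 0 ≤ u) (hv : 0 ≤ v) (huv : u + v ∈ s) :
    f u + f v ≤ f (u + v) := by
  rcases (add_nonneg hu hv).eq_or_lt with h | h
  · obtain rfl : u = 0 := by linarith
    obtain rfl : v = 0 := by linarith
    simp [hf₀]
  -- each of `u`, `v` is a convex combination of `0` and `u + v`
  have key : ∀ w, 0 ≤ w → w ≤ u + v → f w ≤ w / (u + v) * f (u + v) := by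
    intro w hw hwuv
    have := hf.2 h₀ huv (sub_nonneg.2 <| (div_le_one h).2 hwuv)
      (by positivity : 0 ≤ w / (u + v)) (sub_add_cancel _ _)
    rwa [smul_zero, zero_add, smul_eq_mul, div_mul_cancel₀ _ h.ne', smul_eq_mul, hf₀,
      mul_zero, zero_add, smul_eq_mul] at this
  have hfu := key u hu (by linarith)
  have hfv := key v hv (by linarith)
  calc f u + f v ≤ u / (u + v) * f (u + v) + v / (u + v) * f (u + v) := add_le_add hfu hfv
    _ = f (u + v) := by field_simp

noncomputable def buresProfile (u : ℝ) : ℝ := 2 - 2 * √((1 + √(1 - u)) / 2)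

theorem buresProfile_zero : buresProfile 0 = 0 := by norm_num [buresProfile]

theorem monotone_buresProfile : Monotone buresProfile := by
  intro u v huv
  unfold buresProfile
  gcongr

theorem convexOn_buresProfile : ConvexOn ℝ (Iic 1) buresProfile := by
  have h₁ : ConcaveOn ℝ (Iic 1) fun u : ℝ ↦ √(1 - u) :=
    ((concaveOn_const 1 (convex_Iic 1)).sub (convexOn_id (convex_Iic 1))).sqrt
      fun u hu ↦ sub_nonneg.2 hu
  have h₂ : ConcaveOn ℝ (Iic 1) fun u : ℝ ↦ √((1 + √(1 - u)) / 2) := by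
    refine ConcaveOn.sqrt ?_ fun u _ ↦ by positivity
    exact ((h₁.add_const 1).smul (by norm_num : (0 : ℝ) ≤ 1 / 2)).congr fun u _ ↦ by
      simp only [Pi.add_apply, smul_eq_mul]; ring
  exact ((h₂.smul zero_le_two).neg.add_const 2).congr fun u _ ↦ by
    simp only [buresProfile, Pi.add_apply, Pi.neg_apply, smul_eq_mul]; ring

theorem buresProfile_add_le {u v w : ℝ} (hu : 0 ≤ u) (hv : 0 ≤ v) (huvw : u + v ≤ w) (hw : w ≤ 1) :
    buresProfile u + buresProfile v ≤ buresProfile w :=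
  (convexOn_buresProfile.add_le_of_map_zero (mem_Iic.2 zero_le_one) buresProfile_zero hu hv
    (huvw.trans hw)).trans (monotone_buresProfile huvw)

theorem hasDerivAt_one_add_rpow_sub_mul_rpow_neg {x c s : ℝ} (hs : 0 < s) :
    HasDerivAt (fun t ↦ ((1 + t) ^ x - c) * t ^ (-x))
      (x * s ^ (-x - 1) * (c - (1 + s) ^ (x - 1))) s := by
  have h₁ : HasDerivAt (fun t ↦ (1 + t) ^ x - c) (x * (1 + s) ^ (x - 1)) s := by
    simpa using (((hasDerivAt_id s).const_add 1).rpow_const (p := x)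
      (Or.inl (by positivity))).sub_const c
  refine (h₁.mul (Real.hasDerivAt_rpow_const (p := -x) (Or.inl hs.ne'))).congr_deriv ?_
  rw [Real.rpow_sub_one (by positivity : (1 + s) ≠ 0), Real.rpow_sub_one hs.ne']
  field_simp
  ring

theorem monotoneOn_one_add_rpow_sub_div_rpow {x c : ℝ} (hx₀ : 0 ≤ x) (hx₁ : x ≤ 1)
    (hc : (2 : ℝ) ^ (x - 1) ≤ c) :
    MonotoneOn (fun t ↦ ((1 + t) ^ x - c) / t ^ x) (Ici 1) := by
  have hderiv : ∀ s ∈ Ici (1 : ℝ), HasDerivAt (fun t ↦ ((1 + t) ^ x - c) * t ^ (-x))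
      (x * s ^ (-x - 1) * (c - (1 + s) ^ (x - 1))) s := fun s hs ↦
    hasDerivAt_one_add_rpow_sub_mul_rpow_neg (zero_lt_one.trans_le hs)
  have hmono : MonotoneOn (fun t ↦ ((1 + t) ^ x - c) * t ^ (-x)) (Ici 1) := by
    refine monotoneOn_of_hasDerivWithinAt_nonneg (convex_Ici 1)
      (fun s hs ↦ (hderiv s hs).continuousAt.continuousWithinAt)
      (fun s hs ↦ (hderiv s (interior_subset hs)).hasDerivWithinAt) fun s hs ↦ ?_
    rw [interior_Ici, mem_Ioi] at hs
    have hle : (1 + s) ^ (x - 1) ≤ c :=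
      (Real.rpow_le_rpow_of_nonpos two_pos (by linarith) (by linarith)).trans hc
    have hs₀ : 0 ≤ s ^ (-x - 1) := Real.rpow_nonneg (by linarith) _
    exact mul_nonneg (mul_nonneg hx₀ hs₀) (sub_nonneg.2 hle)
  refine hmono.congr fun t ht ↦ ?_
  simp only [Real.rpow_neg (zero_le_one.trans ht), div_eq_mul_inv]

theorem mul_rpow_add_mul_rpow_le_rpow_add {A B K c x : ℝ} (hA : 0 < A) (hK : 1 ≤ K)
    (hKAB : K * A ≤ B) (hx₀ : 0 ≤ x) (hx₁ : x ≤ 1) (hc : (2 : ℝ) ^ (x - 1) ≤ c) :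
    c * A ^ x + ((1 + K) ^ x - c) / K ^ x * B ^ x ≤ (A + B) ^ x := by
  set t := B / A
  have hKt : K ≤ t := (le_div_iff₀ hA).2 hKAB
  have ht : 0 < t := zero_lt_one.trans_le (hK.trans hKt)
  have hB : B = A * t := (mul_div_cancel₀ B hA.ne').symm
  have hmono : ((1 + K) ^ x - c) / K ^ x ≤ ((1 + t) ^ x - c) / t ^ x :=
    monotoneOn_one_add_rpow_sub_div_rpow hx₀ hx₁ hc hK (hK.trans hKt) hKt
  calc c * A ^ x + ((1 + K) ^ x - c) / K ^ x * B ^ x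
      = A ^ x * (c + ((1 + K) ^ x - c) / K ^ x * t ^ x) := by
        rw [hB, Real.mul_rpow hA.le ht.le]; ring
    _ ≤ A ^ x * (c + ((1 + t) ^ x - c) / t ^ x * t ^ x) := by gcongr
    _ = (A + B) ^ x := by
        rw [div_mul_cancel₀ _ (Real.rpow_pos_of_pos ht x).ne', add_sub_cancel,
          ← Real.mul_rpow hA.le (by positivity), hB, mul_one_add]

theorem two_rpow_sub_one_le_half_rpow {x : ℝ} (hx : x ≤ 1 / 2) :
    (2 : ℝ) ^ (x - 1) ≤ (1 / 2 : ℝ) ^ x := by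
  rw [one_div, Real.inv_rpow zero_le_two, ← Real.rpow_neg zero_le_two]
  exact Real.rpow_le_rpow_of_exponent_le one_le_two (by linarith)

theorem stmt_9_general (a b c k ω η α : ℝ)
    (hc0 : 0 ≤ c)
    (hc1 : c ≤ 1)
    (hckw : c ^ 2 ≥ a ^ 2 + b ^ 2)
    (hk : 1 ≤ k) (hω : 1 ≤ ω) (hη : 1 ≤ η) (hα0 : 0 ≤ α) (hα : α ≤ η / 2)
    (fB : ℝ → ℝ)
    (hfB : ∀ x : ℝ, fB x = 2 - 2 * Real.sqrt ((1 + Real.sqrt (1 - x ^ 2)) / 2))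
    (hfa : 0 < fB a) (hcond : fB b ^ η ≥ k ^ ω * fB a ^ η) :
    fB c ^ α ≥ (1 / 2 : ℝ) ^ (α / η) * fB a ^ α +
      ((1 + k ^ ω) ^ (α / η) - (1 / 2 : ℝ) ^ (α / η)) / k ^ (ω * α / η) * fB b ^ α := by
  have hfB : ∀ y, fB y = buresProfile (y ^ 2) := hfB
  have hη₀ : 0 < η := by linarith
  have hx₀ : 0 ≤ α / η := by positivity
  have hx₁ : α / η ≤ 1 / 2 := by rw [div_le_iff₀ hη₀]; linarith
  have hfB₀ (y : ℝ) : 0 ≤ fB y :=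
    hfB y ▸ buresProfile_zero ▸ monotone_buresProfile (sq_nonneg y)
  have hsuper : fB a + fB b ≤ fB c := by
    simpa only [hfB] using
      buresProfile_add_le (sq_nonneg a) (sq_nonneg b) hckw (by nlinarith)
  have hpow : fB a ^ η + fB b ^ η ≤ fB c ^ η :=
    (Real.add_rpow_le_rpow_add (hfB₀ a) (hfB₀ b) hη).trans
      (Real.rpow_le_rpow (add_nonneg (hfB₀ a) (hfB₀ b)) hsuper hη₀.le)
  have hrpow (y : ℝ) (hy : 0 ≤ y) : (y ^ η) ^ (α / η) = y ^ α := by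
    rw [← Real.rpow_mul hy, mul_div_cancel₀ _ hη₀.ne']
  calc (1 / 2 : ℝ) ^ (α / η) * fB a ^ α +
        ((1 + k ^ ω) ^ (α / η) - (1 / 2 : ℝ) ^ (α / η)) / k ^ (ω * α / η) * fB b ^ α
      = (1 / 2 : ℝ) ^ (α / η) * (fB a ^ η) ^ (α / η) +
        ((1 + k ^ ω) ^ (α / η) - (1 / 2 : ℝ) ^ (α / η)) / (k ^ ω) ^ (α / η) *
          (fB b ^ η) ^ (α / η) := by
        rw [hrpow _ (hfB₀ a), hrpow _ (hfB₀ b), ← Real.rpow_mul (by linarith), mul_div_assoc]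
    _ ≤ (fB a ^ η + fB b ^ η) ^ (α / η) :=
        mul_rpow_add_mul_rpow_le_rpow_add (Real.rpow_pos_of_pos hfa η)
          (Real.one_le_rpow hk (by linarith)) hcond hx₀ (by linarith)
          (two_rpow_sub_one_le_half_rpow hx₁)
    _ ≤ (fB c ^ η) ^ (α / η) := Real.rpow_le_rpow
        (add_nonneg (Real.rpow_nonneg (hfB₀ a) η) (Real.rpow_nonneg (hfB₀ b) η)) hpow hx₀
    _ = fB c ^ α := hrpow _ (hfB₀ c)

theorem stmt_9 (a b c k ω η α : ℝ)
    (ha0 : 0 ≤ a) (hb0 : 0 ≤ b) (hc0 : 0 ≤ c)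
    (ha1 : a ≤ 1) (hb1 : b ≤ 1) (hc1 : c ≤ 1)
    (hckw : c ^ 2 ≥ a ^ 2 + b ^ 2)
    (hk : 1 ≤ k) (hω : 1 ≤ ω) (hη : 1 ≤ η) (hα0 : 0 ≤ α) (hα : α ≤ η / 2)
    (fB : ℝ → ℝ)
    (hfB : ∀ x : ℝ, fB x = 2 - 2 * Real.sqrt ((1 + Real.sqrt (1 - x ^ 2)) / 2))
    (hfa : 0 < fB a) (hcond : fB b ^ η ≥ k ^ ω * fB a ^ η) :
    fB c ^ α ≥ (1 / 2 : ℝ) ^ (α / η) * fB a ^ α +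
      ((1 + k ^ ω) ^ (α / η) - (1 / 2 : ℝ) ^ (α / η)) / k ^ (ω * α / η) * fB b ^ α :=
  stmt_9_general a b c k ω η α hc0 hc1 hckw hk hω hη hα0 hα fB hfB hfa hcond
end

section
/- Let a, b, c ≥ 0 with c² ≥ a² + b², a,b,c ≤ 1, and let f_G(x) = (1-√(1-x²))/2. Assume k ≥ 1, ω ≥ 1, η ≥ 1, 0 ≤ α ≤ η/2, and f_G(b)^η ≥ k^ω f_G(a)^η with f_G(a) > 0. Then f_G(c)^α ≥ (1/2)^(α/η) f_G(a)^α + ((1+k^ω)^(α/η) - (1/2)^(α/η))/k^(ωα/η) · f_G(b)^α. -/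
/-!
Write `x = f_G(a)`, `y = f_G(b)`. The CKW inequality gives `x + y ≤ f_G(c)`, i.e.
`1 + √(1 - c²) ≤ √(1 - a²) + √(1 - b²)`. Superadditivity of `t ↦ t ^ η` for `η ≥ 1` then
reduces the claim, with `X = x ^ η`, `Y = y ^ η ≥ K X` (`K = k ^ ω`) and `s = α / η ≤ 1 / 2`, to
`(1/2)^s X^s + ((1 + K)^s - (1/2)^s) / K^s · Y^s ≤ (X + Y)^s`. The coefficient is chosen so that
this is an equality at `X = Y / K`, and for `s ≤ 1 / 2` the function `X ↦ (X + Y)^s - (1/2)^s X^s`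
is antitone on `[0, Y]`.
-/

open Real Set

lemma one_add_sqrt_one_sub_sq_le {a b c : ℝ} (hc : c ^ 2 ≤ 1) (h : a ^ 2 + b ^ 2 ≤ c ^ 2) :
    1 + √(1 - c ^ 2) ≤ √(1 - a ^ 2) + √(1 - b ^ 2) := by
  set s := √(1 - a ^ 2)
  set t := √(1 - b ^ 2)
  have hs2 : s ^ 2 = 1 - a ^ 2 := sq_sqrt (by nlinarith)
  have ht2 : t ^ 2 = 1 - b ^ 2 := sq_sqrt (by nlinarith)
  have hs : 0 ≤ s ∧ s ≤ 1 := ⟨sqrt_nonneg _, sqrt_le_one.2 (by nlinarith)⟩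
  have ht : 0 ≤ t ∧ t ≤ 1 := ⟨sqrt_nonneg _, sqrt_le_one.2 (by nlinarith)⟩
  have hst : 0 ≤ (1 - s) * (1 - t) := mul_nonneg (by linarith) (by linarith)
  suffices √(1 - c ^ 2) ≤ s + t - 1 by linarith
  rw [sqrt_le_left (by nlinarith)]
  nlinarith

lemma add_rpow_sub_one_le_half_rpow_mul {s X Y : ℝ} (hs : s ≤ 1 / 2) (hX : 0 < X)
    (hXY : X ≤ Y) : (X + Y) ^ (s - 1) ≤ (1 / 2) ^ s * X ^ (s - 1) :=
  calc (X + Y) ^ (s - 1) ≤ (2 * X) ^ (s - 1) :=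
        rpow_le_rpow_of_nonpos (by positivity) (by linarith) (by linarith)
    _ = 2 ^ (s - 1) * X ^ (s - 1) := mul_rpow zero_le_two hX.le
    _ ≤ 2 ^ (-s) * X ^ (s - 1) := by
        gcongr
        · norm_num
        · linarith
    _ = (1 / 2) ^ s * X ^ (s - 1) := by
        rw [rpow_neg zero_le_two, one_div, inv_rpow zero_le_two]

lemma antitoneOn_add_rpow_sub_half_rpow {s : ℝ} (hs0 : 0 ≤ s) (hs : s ≤ 1 / 2) (Y : ℝ) :
    AntitoneOn (fun X => (X + Y) ^ s - (1 / 2) ^ s * X ^ s) (Icc 0 Y) := by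
  refine antitoneOn_of_hasDerivWithinAt_nonpos (convex_Icc 0 Y)
    (f' := fun X => s * (X + Y) ^ (s - 1) - (1 / 2) ^ s * (s * X ^ (s - 1)))
    (by fun_prop) (fun X hX => ?_) (fun X hX => ?_)
  all_goals rw [interior_Icc] at hX
  · have hXY : 0 < X + Y := by linarith [hX.1, hX.2]
    refine HasDerivAt.hasDerivWithinAt (HasDerivAt.sub ?_ ?_)
    · simpa using ((hasDerivAt_id X).add_const Y).rpow_const (p := s) (Or.inl hXY.ne')
    · exact (hasDerivAt_rpow_const (Or.inl hX.1.ne')).const_mul _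
  · have := add_rpow_sub_one_le_half_rpow_mul hs hX.1 hX.2.le
    nlinarith [mul_le_mul_of_nonneg_left this hs0]

lemma half_rpow_mul_rpow_add_le_add_rpow_s10 {s K X Y : ℝ} (hs0 : 0 ≤ s) (hs : s ≤ 1 / 2)
    (hK : 1 ≤ K) (hX : 0 ≤ X) (hXY : K * X ≤ Y) :
    (1 / 2) ^ s * X ^ s + ((1 + K) ^ s - (1 / 2) ^ s) / K ^ s * Y ^ s ≤ (X + Y) ^ s := by
  have hK0 : 0 < K := by linarith
  have hY : 0 ≤ Y := le_trans (by positivity) hXY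
  have hXYK : X ≤ Y / K := (le_div_iff₀' hK0).2 hXY
  have hYK : Y / K ≤ Y := div_le_self hY hK
  have h := antitoneOn_add_rpow_sub_half_rpow hs0 hs Y ⟨hX, hXYK.trans hYK⟩
    ⟨div_nonneg hY hK0.le, hYK⟩ hXYK
  have hcoeff : ((1 + K) ^ s - (1 / 2) ^ s) / K ^ s * Y ^ s
      = (Y / K + Y) ^ s - (1 / 2) ^ s * (Y / K) ^ s := by
    rw [show Y / K + Y = (1 + K) * (Y / K) by field_simp,
      mul_rpow (by linarith) (div_nonneg hY hK0.le), div_rpow hY hK0.le]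
    ring
  simp only at h
  linarith

theorem stmt_10_general (a b c k ω η α : ℝ)
    (hc0 : 0 ≤ c) (hc1 : c ≤ 1)
    (hckw : c ^ 2 ≥ a ^ 2 + b ^ 2)
    (hk : 1 ≤ k) (hω : 1 ≤ ω) (hη : 1 ≤ η) (hα0 : 0 ≤ α) (hα : α ≤ η / 2)
    (fG : ℝ → ℝ)
    (hfG : ∀ x : ℝ, fG x = (1 - Real.sqrt (1 - x ^ 2)) / 2)
    (hcond : fG b ^ η ≥ k ^ ω * fG a ^ η) :
    fG c ^ α ≥ (1 / 2 : ℝ) ^ (α / η) * fG a ^ α +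
      ((1 + k ^ ω) ^ (α / η) - (1 / 2 : ℝ) ^ (α / η)) / k ^ (ω * α / η) * fG b ^ α := by
  have hη0 : 0 < η := by linarith
  have hfG0 (x : ℝ) : 0 ≤ fG x := by
    rw [hfG]
    linarith [sqrt_le_one.2 (show 1 - x ^ 2 ≤ 1 by nlinarith)]
  have hxa := hfG0 a
  have hxb := hfG0 b
  have hsuper : fG a + fG b ≤ fG c := by
    simp only [hfG]
    linarith [one_add_sqrt_one_sub_sq_le (by nlinarith) hckw.le]
  have hpow {x : ℝ} (hx : 0 ≤ x) : x ^ α = (x ^ η) ^ (α / η) := by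
    rw [← rpow_mul hx, mul_div_cancel₀ _ hη0.ne']
  rw [ge_iff_le, mul_div_assoc, rpow_mul (by linarith), hpow hxa, hpow hxb,
    hpow (hfG0 c)]
  calc _ ≤ (fG a ^ η + fG b ^ η) ^ (α / η) :=
        half_rpow_mul_rpow_add_le_add_rpow_s10 (by positivity)
          (by rw [div_le_iff₀ hη0]; linarith) (one_le_rpow hk (by linarith))
          (rpow_nonneg hxa η) hcond
    _ ≤ ((fG a + fG b) ^ η) ^ (α / η) := by
        gcongr
        exact add_rpow_le_rpow_add hxa hxb hη
    _ ≤ (fG c ^ η) ^ (α / η) := by gcongr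

theorem stmt_10 (a b c k ω η α : ℝ)
    (ha0 : 0 ≤ a) (hb0 : 0 ≤ b) (hc0 : 0 ≤ c)
    (ha1 : a ≤ 1) (hb1 : b ≤ 1) (hc1 : c ≤ 1)
    (hckw : c ^ 2 ≥ a ^ 2 + b ^ 2)
    (hk : 1 ≤ k) (hω : 1 ≤ ω) (hη : 1 ≤ η) (hα0 : 0 ≤ α) (hα : α ≤ η / 2)
    (fG : ℝ → ℝ)
    (hfG : ∀ x : ℝ, fG x = (1 - Real.sqrt (1 - x ^ 2)) / 2)
    (hfa : 0 < fG a) (hcond : fG b ^ η ≥ k ^ ω * fG a ^ η) :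
    fG c ^ α ≥ (1 / 2 : ℝ) ^ (α / η) * fG a ^ α +
      ((1 + k ^ ω) ^ (α / η) - (1 / 2 : ℝ) ^ (α / η)) / k ^ (ω * α / η) * fG b ^ α :=
  stmt_10_general a b c k ω η α hc0 hc1 hckw hk hω hη hα0 hα fG hfG hcond
end

section
/- Let n ≥ 3, let c, a_2, …, a_n ≥ 0 satisfy c² ≥ a_2² + ⋯ + a_n², and let f : [0,1] → ℝ≥0 be increasing with f(√(x²+y²))^η ≥ f(x)^η + f(y)^η. Fix k ≥ 1, ω ≥ 1, 0 ≤ α ≤ η/2, and set μ = ((1+k^ω)^(α/η) - (1/2)^(α/η))/k^(ωα/η). If for each i = 2,…,n-1 one has k^ω f(a_i)^η ≤ f(√(a_{i+1}²+⋯+a_n²))^η, then f(c)^α ≥ (1/2)^(α/η)·(f(a_2)^α + μ f(a_3)^α + ⋯ + μ^{n-3} f(a_{n-1})^α) + μ^{n-2} f(a_n)^α. -/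
/-!
Put `β = α / η ≤ 1 / 2`, `K = k ^ ω ≥ 1`, `μ = monogamyWeight K β`, and let `S i = ∑_{j=i}^n a_j²`
be the tail sums, so that `S i = a_i² + S (i + 1)` and `√(S 2) ≤ c`. Superadditivity gives
`f(√S_i)^η ≥ f(a_i)^η + f(√S_{i+1})^η`, and the elementary inequality
`(x + y)^β ≥ (1/2)^β x^β + μ y^β` for `K x ≤ y` turns it into the recursion
`F i ≥ (1/2)^β f(a_i)^α + μ F (i + 1)` for `F i = f(√S_i)^α`; unrolling it from `i = 2` to `n - 1`
and using monotonicity of `f` at `√(S 2) ≤ c` gives the claim.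

The elementary inequality reduces, for `t = x / y ∈ [0, 1/K]`, to `g t ≥ g (1/K)` with
`g t = (1 + t)^β - (1/2)^β t^β`; `g` decreases on `[0, 1]` because `t / (1 + t) ≤ 1/2` and
`1 - β ≥ β`.
-/

open Real Finset

lemma one_add_rpow_sub_one_le_half_rpow_mul_s15 {β t : ℝ} (hβ : β ≤ 1 / 2) (ht0 : 0 < t)
    (ht1 : t ≤ 1) : (1 + t) ^ (β - 1) ≤ (1 / 2) ^ β * t ^ (β - 1) := by
  have h1t : 0 < 1 + t := by linarith
  set r := t / (1 + t) with hr_def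
  have hr0 : 0 < r := by positivity
  have hr : r ≤ 1 / 2 := by rw [div_le_iff₀ h1t]; linarith
  have ht : t ^ (β - 1) = r ^ (β - 1) * (1 + t) ^ (β - 1) := by
    rw [← mul_rpow hr0.le h1t.le, hr_def, div_mul_cancel₀ _ h1t.ne']
  calc (1 + t) ^ (β - 1) = r ^ (1 - β) * t ^ (β - 1) := by
        rw [ht, ← mul_assoc, ← rpow_add hr0, show 1 - β + (β - 1) = 0 by ring, rpow_zero,
          one_mul]
    _ ≤ (1 / 2) ^ β * t ^ (β - 1) := by
      gcongr
      calc r ^ (1 - β) ≤ (1 / 2) ^ (1 - β) := rpow_le_rpow hr0.le hr (by linarith)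
        _ ≤ (1 / 2) ^ β := rpow_le_rpow_of_exponent_ge (by norm_num) (by norm_num) (by linarith)

lemma antitoneOn_one_add_rpow_sub_half_rpow_mul_rpow_s15 {β : ℝ} (hβ0 : 0 ≤ β) (hβ : β ≤ 1 / 2) :
    AntitoneOn (fun t : ℝ ↦ (1 + t) ^ β - (1 / 2) ^ β * t ^ β) (Set.Icc 0 1) := by
  refine antitoneOn_of_hasDerivWithinAt_nonpos (convex_Icc 0 1)
    (f' := fun t ↦ β * (1 + t) ^ (β - 1) - (1 / 2) ^ β * (β * t ^ (β - 1))) ?_ ?_ ?_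
  · exact ((continuous_const.add continuous_id).rpow_const fun _ ↦ Or.inr hβ0).continuousOn.sub
      (continuous_const.mul (continuous_id.rpow_const fun _ ↦ Or.inr hβ0)).continuousOn
  · intro t ht
    rw [interior_Icc] at ht
    have h1t : 1 + t ≠ 0 := by linarith [ht.1]
    have hd := ((hasDerivAt_id t).const_add 1).rpow_const (p := β) (Or.inl h1t)
    simp only [id, one_mul] at hd
    exact (hd.sub ((hasDerivAt_rpow_const (Or.inl ht.1.ne')).const_mul _)).hasDerivWithinAt
  · intro t ht
    rw [interior_Icc] at ht
    have := one_add_rpow_sub_one_le_half_rpow_mul_s15 hβ ht.1 ht.2.le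
    nlinarith [mul_le_mul_of_nonneg_left this hβ0]

noncomputable def monogamyWeight (K β : ℝ) : ℝ := ((1 + K) ^ β - (1 / 2) ^ β) / K ^ β

lemma monogamyWeight_nonneg {K β : ℝ} (hK : 0 ≤ K) (hβ : 0 ≤ β) : 0 ≤ monogamyWeight K β :=
  div_nonneg (sub_nonneg.2 (rpow_le_rpow (by norm_num) (by linarith) hβ)) (by positivity)

lemma half_rpow_mul_rpow_add_monogamyWeight_le {β K t : ℝ} (hβ0 : 0 ≤ β) (hβ : β ≤ 1 / 2)
    (hK : 1 ≤ K) (ht0 : 0 ≤ t) (htK : t ≤ K⁻¹) :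
    (1 / 2) ^ β * t ^ β + monogamyWeight K β ≤ (1 + t) ^ β := by
  have hK0 : 0 < K := by linarith
  have hK1 : K⁻¹ ≤ 1 := inv_le_one_of_one_le₀ hK
  have hg := antitoneOn_one_add_rpow_sub_half_rpow_mul_rpow_s15 hβ0 hβ ⟨ht0, htK.trans hK1⟩
    ⟨by positivity, hK1⟩ htK
  have hw : monogamyWeight K β = (1 + K⁻¹) ^ β - (1 / 2) ^ β * K⁻¹ ^ β := by
    rw [monogamyWeight, show 1 + K⁻¹ = (1 + K) / K by field_simp; ring,
      div_rpow (by linarith) hK0.le, inv_rpow hK0.le]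
    ring
  simp only at hg
  linarith

lemma half_rpow_mul_rpow_add_monogamyWeight_mul_rpow_le {β K x y : ℝ} (hβ0 : 0 ≤ β)
    (hβ : β ≤ 1 / 2) (hK : 1 ≤ K) (hx : 0 ≤ x) (hy : 0 ≤ y) (hxy : K * x ≤ y) :
    (1 / 2) ^ β * x ^ β + monogamyWeight K β * y ^ β ≤ (x + y) ^ β := by
  rcases hβ0.eq_or_lt with rfl | hβ0'
  · simp [monogamyWeight]
  rcases hy.eq_or_lt with rfl | hy0
  · obtain rfl : x = 0 := by nlinarith
    simp [zero_rpow hβ0'.ne']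
  obtain ⟨t, ht0, rfl⟩ : ∃ t, 0 ≤ t ∧ x = t * y :=
    ⟨x / y, div_nonneg hx hy, (div_mul_cancel₀ x hy0.ne').symm⟩
  have htK : t ≤ K⁻¹ := by
    rw [inv_eq_one_div, le_div_iff₀ (by linarith)]
    nlinarith
  calc (1 / 2) ^ β * (t * y) ^ β + monogamyWeight K β * y ^ β
      = ((1 / 2) ^ β * t ^ β + monogamyWeight K β) * y ^ β := by rw [mul_rpow ht0 hy]; ring
    _ ≤ (1 + t) ^ β * y ^ β := by
      gcongr
      exact half_rpow_mul_rpow_add_monogamyWeight_le hβ0 hβ hK ht0 htK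
    _ = (t * y + y) ^ β := by rw [← mul_rpow (by positivity) hy]; ring_nf

lemma half_rpow_mul_rpow_add_monogamyWeight_mul_rpow_le_of_rpow {η α K x y z : ℝ} (hη : 0 < η)
    (hα0 : 0 ≤ α) (hα : α ≤ η / 2) (hK : 1 ≤ K) (hx : 0 ≤ x) (hy : 0 ≤ y) (hz : 0 ≤ z)
    (hxy : K * x ^ η ≤ y ^ η) (hxyz : x ^ η + y ^ η ≤ z ^ η) :
    (1 / 2) ^ (α / η) * x ^ α + monogamyWeight K (α / η) * y ^ α ≤ z ^ α := by
  have hpow : ∀ w : ℝ, 0 ≤ w → (w ^ η) ^ (α / η) = w ^ α := fun w hw ↦ by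
    rw [← rpow_mul hw, mul_div_cancel₀ _ hη.ne']
  have hβ : α / η ≤ 1 / 2 := by rw [div_le_iff₀ hη]; linarith
  rw [← hpow x hx, ← hpow y hy, ← hpow z hz]
  calc _ ≤ (x ^ η + y ^ η) ^ (α / η) :=
        half_rpow_mul_rpow_add_monogamyWeight_mul_rpow_le (by positivity) hβ hK (by positivity)
          (by positivity) hxy
    _ ≤ (z ^ η) ^ (α / η) := by gcongr

lemma half_rpow_mul_rpow_add_monogamyWeight_mul_rpow_le_of_superadditive {f : ℝ → ℝ}
    {η α K u v : ℝ} (hf_nonneg : ∀ z ∈ Set.Icc (0 : ℝ) 1, 0 ≤ f z)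
    (hf_super : ∀ u v : ℝ, 0 ≤ u → 0 ≤ v → u ^ 2 + v ^ 2 ≤ 1 →
      f √(u ^ 2 + v ^ 2) ^ η ≥ f u ^ η + f v ^ η)
    (hη : 0 < η) (hα0 : 0 ≤ α) (hα : α ≤ η / 2) (hK : 1 ≤ K) (hu : 0 ≤ u) (hv : 0 ≤ v)
    (huv : u ^ 2 + v ^ 2 ≤ 1) (hcond : K * f u ^ η ≤ f v ^ η) :
    (1 / 2) ^ (α / η) * f u ^ α + monogamyWeight K (α / η) * f v ^ α ≤ f √(u ^ 2 + v ^ 2) ^ α := by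
  have hmem : ∀ w, 0 ≤ w → w ^ 2 ≤ 1 → 0 ≤ f w := fun w hw hw1 ↦
    hf_nonneg w ⟨hw, by nlinarith⟩
  exact half_rpow_mul_rpow_add_monogamyWeight_mul_rpow_le_of_rpow hη hα0 hα hK
    (hmem u hu (by nlinarith)) (hmem v hv (by nlinarith))
    (hmem _ (sqrt_nonneg _) (by rwa [sq_sqrt (by positivity)])) hcond (hf_super u v hu hv huv)

lemma sum_Ico_pow_mul_add_pow_mul_le {R : Type*} [CommSemiring R] [PartialOrder R]
    [IsOrderedRing R] {μ : R} (hμ : 0 ≤ μ) {b F : ℕ → R} {m N : ℕ} (hmN : m ≤ N)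
    (h : ∀ i, m ≤ i → i < N → b i + μ * F (i + 1) ≤ F i) :
    ∑ i ∈ Ico m N, μ ^ (i - m) * b i + μ ^ (N - m) * F N ≤ F m := by
  induction N, hmN using Nat.le_induction with
  | base => simp
  | succ N hmN ih =>
    have hstep := mul_le_mul_of_nonneg_left (h N hmN N.lt_succ_self) (pow_nonneg hμ (N - m))
    rw [sum_Ico_succ_top hmN, Nat.succ_sub hmN, pow_succ]
    calc _ = ∑ i ∈ Ico m N, μ ^ (i - m) * b i + μ ^ (N - m) * (b N + μ * F (N + 1)) := by ring
      _ ≤ F m :=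
        (add_le_add_right hstep _).trans (ih fun i hi hiN ↦ h i hi (hiN.trans N.lt_succ_self))

theorem stmt_15_general (n : ℕ) (hn : 3 ≤ n) (c : ℝ) (a : ℕ → ℝ)
    (hc0 : 0 ≤ c) (hc1 : c ≤ 1)
    (ha0 : ∀ i, 0 ≤ a i)
    (hckw : c ^ 2 ≥ ∑ i ∈ Finset.Icc 2 n, a i ^ 2)
    (f : ℝ → ℝ) (η k ω α : ℝ)
    (hf_nonneg : ∀ z ∈ Set.Icc (0 : ℝ) 1, 0 ≤ f z)
    (hf_mono : MonotoneOn f (Set.Icc (0 : ℝ) 1))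
    (hη : 1 ≤ η)
    (hf_super : ∀ u v : ℝ, 0 ≤ u → 0 ≤ v → u ^ 2 + v ^ 2 ≤ 1 →
      f (Real.sqrt (u ^ 2 + v ^ 2)) ^ η ≥ f u ^ η + f v ^ η)
    (hk : 1 ≤ k) (hω : 1 ≤ ω) (hα0 : 0 ≤ α) (hα : α ≤ η / 2)
    (hcond : ∀ i, 2 ≤ i → i ≤ n - 1 →
      k ^ ω * f (a i) ^ η ≤ f (Real.sqrt (∑ j ∈ Finset.Icc (i + 1) n, a j ^ 2)) ^ η) :
    f c ^ α ≥
      (1 / 2 : ℝ) ^ (α / η) *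
          (∑ i ∈ Finset.Icc 2 (n - 1),
            (((1 + k ^ ω) ^ (α / η) - (1 / 2 : ℝ) ^ (α / η)) / k ^ (ω * α / η)) ^ (i - 2) *
              f (a i) ^ α) +
        (((1 + k ^ ω) ^ (α / η) - (1 / 2 : ℝ) ^ (α / η)) / k ^ (ω * α / η)) ^ (n - 2) *
          f (a n) ^ α := by
  have hK : 1 ≤ k ^ ω := one_le_rpow hk (by linarith)
  have hμ : ((1 + k ^ ω) ^ (α / η) - (1 / 2 : ℝ) ^ (α / η)) / k ^ (ω * α / η) =
      monogamyWeight (k ^ ω) (α / η) := by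
    rw [monogamyWeight, mul_div_assoc, rpow_mul (by linarith)]
  set S : ℕ → ℝ := fun i ↦ ∑ j ∈ Icc i n, a j ^ 2 with hS
  have hS_le : ∀ i, 2 ≤ i → S i ≤ c ^ 2 := fun i hi ↦
    (sum_le_sum_of_subset_of_nonneg (Icc_subset_Icc_left hi) fun _ _ _ ↦ sq_nonneg _).trans hckw
  have hS_le_one : ∀ i, 2 ≤ i → S i ≤ 1 := fun i hi ↦ (hS_le i hi).trans (by nlinarith)
  have hstep : ∀ i, 2 ≤ i → i < n →
      (1 / 2) ^ (α / η) * f (a i) ^ α + monogamyWeight (k ^ ω) (α / η) * f √(S (i + 1)) ^ α ≤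
        f √(S i) ^ α := fun i hi hin ↦ by
    have hsq : a i ^ 2 + √(S (i + 1)) ^ 2 = S i := by
      simp only [hS, sq_sqrt (sum_nonneg fun _ _ ↦ sq_nonneg _)]
      rw [Icc_eq_cons_Ioc hin.le, sum_cons, ← Icc_add_one_left_eq_Ioc]
    have h := half_rpow_mul_rpow_add_monogamyWeight_mul_rpow_le_of_superadditive hf_nonneg
      hf_super (by linarith) hα0 hα hK (ha0 i) (sqrt_nonneg _) (hsq ▸ hS_le_one i hi)
      (hcond i hi (by omega))
    rwa [hsq] at h
  have hunrolled := sum_Ico_pow_mul_add_pow_mul_le (F := fun i ↦ f √(S i) ^ α)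
    (monogamyWeight_nonneg (by linarith) (by positivity)) (by omega : 2 ≤ n) hstep
  have hSc : f √(S 2) ^ α ≤ f c ^ α := by
    have hS2 : √(S 2) ∈ Set.Icc (0 : ℝ) 1 := ⟨sqrt_nonneg _, sqrt_le_one.2 (hS_le_one 2 le_rfl)⟩
    refine rpow_le_rpow (hf_nonneg _ hS2) (hf_mono hS2 ⟨hc0, hc1⟩ ?_) hα0
    exact (sqrt_le_sqrt (hS_le 2 le_rfl)).trans_eq (sqrt_sq hc0)
  obtain ⟨m, rfl⟩ : ∃ m, n = m + 1 := ⟨n - 1, by omega⟩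
  simp only [hS, Icc_self, sum_singleton, sqrt_sq (ha0 _)] at hunrolled
  rw [hμ, Nat.add_sub_cancel, ← Ico_add_one_right_eq_Icc, mul_sum]
  simp_rw [mul_left_comm ((1 / 2 : ℝ) ^ (α / η))]
  exact hunrolled.trans hSc

theorem stmt_15 (n : ℕ) (hn : 3 ≤ n) (c : ℝ) (a : ℕ → ℝ)
    (hc0 : 0 ≤ c) (hc1 : c ≤ 1)
    (ha0 : ∀ i, 0 ≤ a i) (ha1 : ∀ i, a i ≤ 1)
    (hckw : c ^ 2 ≥ ∑ i ∈ Finset.Icc 2 n, a i ^ 2)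
    (f : ℝ → ℝ) (η k ω α : ℝ)
    (hf_nonneg : ∀ z ∈ Set.Icc (0 : ℝ) 1, 0 ≤ f z)
    (hf_mono : MonotoneOn f (Set.Icc (0 : ℝ) 1))
    (hη : 1 ≤ η)
    (hf_super : ∀ u v : ℝ, 0 ≤ u → 0 ≤ v → u ^ 2 + v ^ 2 ≤ 1 →
      f (Real.sqrt (u ^ 2 + v ^ 2)) ^ η ≥ f u ^ η + f v ^ η)
    (hk : 1 ≤ k) (hω : 1 ≤ ω) (hα0 : 0 ≤ α) (hα : α ≤ η / 2)
    (hcond : ∀ i, 2 ≤ i → i ≤ n - 1 →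
      k ^ ω * f (a i) ^ η ≤ f (Real.sqrt (∑ j ∈ Finset.Icc (i + 1) n, a j ^ 2)) ^ η) :
    f c ^ α ≥
      (1 / 2 : ℝ) ^ (α / η) *
          (∑ i ∈ Finset.Icc 2 (n - 1),
            (((1 + k ^ ω) ^ (α / η) - (1 / 2 : ℝ) ^ (α / η)) / k ^ (ω * α / η)) ^ (i - 2) *
              f (a i) ^ α) +
        (((1 + k ^ ω) ^ (α / η) - (1 / 2 : ℝ) ^ (α / η)) / k ^ (ω * α / η)) ^ (n - 2) *
          f (a n) ^ α :=
  stmt_15_general n hn c a hc0 hc1 ha0 hckw f η k ω α hf_nonneg hf_mono hη hf_super hk hω hα0 hα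
    hcond
end

section
/- Let a, b ≥ 0 with a² + b² ≤ C², where C ≥ 0, and suppose b² ≤ k^ω a², with 0 < k ≤ 1, k^ω ≤ k, ω ≥ 1, α ≥ 2, and a > 0. Then C^α ≥ (1/2)^(α/2) a^α + ((1+k^ω)^(α/2) - (1/2)^(α/2))/k^(ωα/2) · b^α. -/
open Real Set

lemma rpow_increment {p x y d : ℝ} (hp : 1 ≤ p) (hx : 0 ≤ x) (hxy : x ≤ y) (hd : 0 ≤ d) :
    (x + d) ^ p - x ^ p ≤ (y + d) ^ p - y ^ p := by
  rcases eq_or_lt_of_le hd with rfl | hd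
  · simp
  rcases eq_or_lt_of_le hxy with rfl | hxy
  · exact le_refl _
  have hcv := convexOn_rpow hp
  have hy : (0:ℝ) ≤ y := le_trans hx hxy.le
  have hmx : x ∈ Ici (0:ℝ) := hx
  have hmxd : x + d ∈ Ici (0:ℝ) := by simp only [mem_Ici]; linarith
  have hmy : y ∈ Ici (0:ℝ) := hy
  have hmyd : y + d ∈ Ici (0:ℝ) := by simp only [mem_Ici]; linarith
  have h1 := hcv.secant_mono (a := x) hmx hmxd hmyd
    (by intro h; nlinarith [h]) (by intro h; nlinarith [h]) (by linarith)
  have h2 := hcv.secant_mono (a := y + d) hmyd hmx hmy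
    (by intro h; nlinarith [h]) (by intro h; nlinarith [h]) hxy.le
  have e1 : (x + d) - x = d := by ring
  have hden : (0:ℝ) < (y + d) - x := by linarith
  rw [e1] at h1
  have h2' : ((y+d)^p - x^p)/((y+d)-x) ≤ ((y+d)^p - y^p)/d := by
    have e2 : y - (y + d) = -d := by ring
    rw [e2, div_neg, ← neg_div, neg_sub] at h2
    calc ((y+d)^p - x^p)/((y+d)-x) = (x^p - (y+d)^p)/(x-(y+d)) := by
          rw [← neg_div_neg_eq, neg_sub, neg_sub]
      _ ≤ ((y+d)^p - y^p)/d := h2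
  have hch := le_trans h1 h2'
  calc (x+d)^p - x^p = ((x+d)^p - x^p)/d * d := by field_simp
    _ ≤ ((y+d)^p - y^p)/d * d := by
        exact mul_le_mul_of_nonneg_right hch hd.le
    _ = (y+d)^p - y^p := by field_simp

lemma key_ineq {p K t : ℝ} (hp : 1 ≤ p) (hK0 : 0 < K) (ht0 : 0 ≤ t) (htK : t ≤ K) :
    (1/2:ℝ) ^ p + ((1 + K) ^ p - (1/2:ℝ) ^ p) * (t/K) ^ p ≤ (1 + t) ^ p := by
  have hKp : (0:ℝ) < K ^ p := rpow_pos_of_pos hK0 p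
  have e : (1/2:ℝ) ^ p + ((1 + K) ^ p - (1/2:ℝ) ^ p) * (t/K) ^ p
      = ((1/2:ℝ)^p * K^p + ((1+K)^p - (1/2:ℝ)^p) * t^p) / K^p := by
    rw [div_rpow ht0 hK0.le]; field_simp
  rw [e, div_le_iff₀ hKp]
  have r1 : (1/2:ℝ)^p * K^p = (K/2)^p := by
    rw [← mul_rpow (by norm_num) hK0.le]; congr 1; ring
  have r2 : ((1:ℝ)+t)^p * K^p = (K + K*t)^p := by
    rw [← mul_rpow (by linarith) hK0.le]; congr 1; ring
  have r3 : ((1:ℝ)+K)^p * t^p = (t + K*t)^p := by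
    rw [← mul_rpow (by linarith) ht0]; congr 1; ring
  have r4 : (1/2:ℝ)^p * t^p = (t/2)^p := by
    rw [← mul_rpow (by norm_num) ht0]; congr 1; ring
  have L := rpow_increment (x := t/2) (y := t + K*t) (d := K - t) hp
    (by linarith) (by nlinarith) (by linarith)
  have e5 : t + K*t + (K - t) = K + K*t := by ring
  rw [e5] at L
  have mono : (K/2:ℝ)^p ≤ (t/2 + (K-t))^p :=
    rpow_le_rpow (by linarith) (by linarith) (by linarith)
  rw [sub_mul, r1, r2, r3, r4]
  linarith

theorem stmt_17 (a b C k ω α : ℝ)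
    (ha0 : 0 < a) (hb0 : 0 ≤ b) (hC0 : 0 ≤ C)
    (hsum : a ^ 2 + b ^ 2 ≤ C ^ 2)
    (hcond : b ^ 2 ≤ k ^ ω * a ^ 2)
    (hk0 : 0 < k) (hk1 : k ≤ 1) (hkω : k ^ ω ≤ k) (hω : 1 ≤ ω) (hα : 2 ≤ α) :
    C ^ α ≥ (1 / 2 : ℝ) ^ (α / 2) * a ^ α +
      ((1 + k ^ ω) ^ (α / 2) - (1 / 2 : ℝ) ^ (α / 2)) / k ^ (ω * α / 2) * b ^ α := by
  have hp : 1 ≤ α / 2 := by linarith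
  have hK0 : 0 < k ^ ω := rpow_pos_of_pos hk0 ω
  have ha2 : 0 < a ^ 2 := by positivity
  set t := b ^ 2 / a ^ 2 with ht
  have ht0 : 0 ≤ t := by positivity
  have htK : t ≤ k ^ ω := by rw [ht, div_le_iff₀ ha2]; linarith
  have key := key_ineq hp hK0 ht0 htK
  have hCα : ((C ^ 2 : ℝ)) ^ (α / 2) = C ^ α := by
    rw [← Real.rpow_natCast C 2, ← Real.rpow_mul hC0]
    norm_num
    congr 1; ring
  have haα : ((a ^ 2 : ℝ)) ^ (α / 2) = a ^ α := by
    rw [← Real.rpow_natCast a 2, ← Real.rpow_mul ha0.le]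
    norm_num
    congr 1; ring
  have hKα : (k ^ ω) ^ (α / 2) = k ^ (ω * α / 2) := by
    rw [← Real.rpow_mul hk0.le]
    congr 1; ring
  have htb : t ^ (α / 2) * (a ^ 2) ^ (α / 2) = b ^ α := by
    rw [← mul_rpow ht0 ha2.le,
      show t * a ^ 2 = b ^ 2 by rw [ht]; field_simp,
      ← Real.rpow_natCast b 2, ← Real.rpow_mul hb0]
    norm_num
    congr 1; ring
  have hKp : (0 : ℝ) < k ^ (ω * α / 2) := rpow_pos_of_pos hk0 _
  have ha2p : (0 : ℝ) < (a ^ 2) ^ (α / 2) := rpow_pos_of_pos ha2 _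
  have step1 : (a ^ 2 + b ^ 2 : ℝ) ^ (α / 2) ≤ C ^ α := by
    rw [← hCα]
    exact rpow_le_rpow (by positivity) hsum (by linarith)
  have step2 : (1 + t) ^ (α / 2) * (a ^ 2) ^ (α / 2) = (a ^ 2 + b ^ 2 : ℝ) ^ (α / 2) := by
    rw [← mul_rpow (by linarith) ha2.le]
    congr 1
    rw [ht]; field_simp
  have hdiv : (t / k ^ ω) ^ (α / 2) * (a ^ 2) ^ (α / 2) = b ^ α / k ^ (ω * α / 2) := by
    rw [div_rpow ht0 hK0.le, hKα, div_mul_eq_mul_div, htb]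
  have main : (1 / 2 : ℝ) ^ (α / 2) * (a ^ 2) ^ (α / 2) +
      ((1 + k ^ ω) ^ (α / 2) - (1 / 2 : ℝ) ^ (α / 2)) *
        ((t / k ^ ω) ^ (α / 2) * (a ^ 2) ^ (α / 2)) ≤ C ^ α := by
    calc (1 / 2 : ℝ) ^ (α / 2) * (a ^ 2) ^ (α / 2) +
        ((1 + k ^ ω) ^ (α / 2) - (1 / 2 : ℝ) ^ (α / 2)) *
          ((t / k ^ ω) ^ (α / 2) * (a ^ 2) ^ (α / 2))
        = ((1 / 2 : ℝ) ^ (α / 2) +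
            ((1 + k ^ ω) ^ (α / 2) - (1 / 2 : ℝ) ^ (α / 2)) * (t / k ^ ω) ^ (α / 2)) *
            (a ^ 2) ^ (α / 2) := by ring
      _ ≤ (1 + t) ^ (α / 2) * (a ^ 2) ^ (α / 2) :=
          mul_le_mul_of_nonneg_right key ha2p.le
      _ = (a ^ 2 + b ^ 2 : ℝ) ^ (α / 2) := step2
      _ ≤ C ^ α := step1
  rw [hdiv, haα] at main
  have : ((1 + k ^ ω) ^ (α / 2) - (1 / 2 : ℝ) ^ (α / 2)) * (b ^ α / k ^ (ω * α / 2)) =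
      ((1 + k ^ ω) ^ (α / 2) - (1 / 2 : ℝ) ^ (α / 2)) / k ^ (ω * α / 2) * b ^ α := by
    ring
  rw [this] at main
  exact main
end
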